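/- arXiv:1606.04455 — 5 statements merged into one kernel-verified Lean document; each statement's English description precedes it below -/
import Mathlib

section
/- Let σ = ∩_{i∈I} {x ∈ R^n : ⟨x, u_i⟩ ≥ b_i} be a polyhedron whose recession cone contains a linear subspace V = span(τ) for a cone τ. Then σ + V = ∩_{i∈I, u_i ∈ τ^⊥} {x ∈ R^n : ⟨x, u_i⟩ ≥ b_i}, i.e., the Minkowski sum of σ with the span of τ is cut out by exactly those defining inequalities whose normal vectors vanish on τ. -/
/-- for a nonempty polyhedron `σ = ∩ᵢ {x : ⟨x, uᵢ⟩ ≥ bᵢ}` whose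
recession cone contains a convex cone `τ`, the Minkowski sum `σ + span(τ)` is cut
out by exactly those inequalities whose normal vectors vanish on `τ`. -/
theorem polyhedron_add_span_eq (n r : ℕ) (u : Fin r → Fin n → ℝ) (b : Fin r → ℝ)
    (σ τ : Set (Fin n → ℝ))
    (hσ : σ = {x | ∀ i, b i ≤ ∑ j, x j * u i j})
    (hne : σ.Nonempty)
    (hτ0 : (0 : Fin n → ℝ) ∈ τ)
    (hτadd : ∀ v ∈ τ, ∀ w ∈ τ, v + w ∈ τ)
    (hτsmul : ∀ v ∈ τ, ∀ t : ℝ, 0 ≤ t → t • v ∈ τ)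
    (hτrec : ∀ x ∈ σ, ∀ v ∈ τ, ∀ t : ℝ, 0 ≤ t → x + t • v ∈ σ) :
    {z | ∃ x ∈ σ, ∃ v ∈ Submodule.span ℝ τ, z = x + v}
      = {x | ∀ i, (∀ v ∈ τ, ∑ j, v j * u i j = 0) → b i ≤ ∑ j, x j * u i j} := by
  classical
  -- the linear functionals
  set f : Fin r → (Fin n → ℝ) →ₗ[ℝ] ℝ := fun i =>
    { toFun := fun x => ∑ j, x j * u i j
      map_add' := by intro x y; simp [add_mul, Finset.sum_add_distrib]
      map_smul' := by intro c x; simp [Finset.mul_sum, mul_assoc] } with hf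
  have hfapp : ∀ i x, f i x = ∑ j, x j * u i j := fun i x => rfl
  -- nonnegativity of f i on τ
  obtain ⟨x0, hx0⟩ := hne
  have hx0' : ∀ i, b i ≤ f i x0 := by rw [hσ] at hx0; exact hx0
  have hpos : ∀ i, ∀ v ∈ τ, 0 ≤ f i v := by
    intro i v hv
    by_contra h
    push_neg at h
    set c := f i v with hc
    have hb := hx0' i
    have ht : (0:ℝ) ≤ (f i x0 - b i + 1) / (-c) := by
      apply div_nonneg <;> linarith
    have hmem := hτrec x0 hx0 v hv _ ht
    rw [hσ] at hmem
    have := hmem i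
    rw [← hfapp, map_add, map_smul] at this
    have hcne : c ≠ 0 := ne_of_lt h
    have : b i ≤ f i x0 + ((f i x0 - b i + 1) / (-c)) * c := this
    rw [div_mul_eq_mul_div, mul_comm] at this
    have h2 : c * (f i x0 - b i + 1) / (-c) = -(f i x0 - b i + 1) := by
      rw [div_neg, mul_div_cancel_left₀ _ hcne]
    rw [h2] at this
    linarith
  ext z
  simp only [Set.mem_setOf_eq]
  constructor
  · rintro ⟨x, hx, v, hv, rfl⟩ i hi
    have hker : f i v = 0 := by
      have : Submodule.span ℝ τ ≤ LinearMap.ker (f i) := by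
        rw [Submodule.span_le]
        intro w hw
        exact hi w hw
      exact this hv
    rw [hσ] at hx
    calc b i ≤ f i x := hx i
      _ = f i x + f i v := by rw [hker]; ring
      _ = f i (x + v) := by rw [map_add]
      _ = ∑ j, (x + v) j * u i j := hfapp i _
  · intro hz
    -- choose for each i a witness in τ
    have hch : ∀ i : Fin r, ∃ w, w ∈ τ ∧ (¬ (∀ v ∈ τ, ∑ j, v j * u i j = 0) → 0 < f i w) := by
      intro i
      by_cases h : ∀ v ∈ τ, ∑ j, v j * u i j = 0
      · exact ⟨0, hτ0, fun hc => absurd h hc⟩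
      · push_neg at h
        obtain ⟨v, hv, hv0⟩ := h
        exact ⟨v, hv, fun _ => lt_of_le_of_ne (hpos i v hv) (Ne.symm hv0)⟩
    choose g hgτ hgpos using hch
    set w : Fin n → ℝ := ∑ i, g i with hw
    have hwτ : w ∈ τ := by
      refine Finset.sum_induction g (· ∈ τ) (fun a b ha hb => hτadd a ha b hb) hτ0
        (fun i _ => hgτ i)
    have hfw : ∀ i, f i w = ∑ i', f i (g i') := by
      intro i; rw [hw, map_sum]
    have hfwnn : ∀ i, 0 ≤ f i w := fun i => hpos i w hwτ
    have hfwpos : ∀ i, ¬ (∀ v ∈ τ, ∑ j, v j * u i j = 0) → 0 < f i w := by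
      intro i hi
      rw [hfw]
      refine Finset.sum_pos' (fun i' _ => hpos i (g i') (hgτ i')) ⟨i, Finset.mem_univ i, hgpos i hi⟩
    have hfwzero : ∀ i, (∀ v ∈ τ, ∑ j, v j * u i j = 0) → f i w = 0 := by
      intro i hi
      exact hi w hwτ
    -- choose t big enough
    set S : Finset ℝ := insert (0:ℝ) (Finset.univ.image fun i => (b i - f i z) / f i w) with hS
    have hSne : S.Nonempty := ⟨0, Finset.mem_insert_self _ _⟩
    set t := S.max' hSne with htdef
    have ht0 : (0:ℝ) ≤ t := S.le_max' 0 (Finset.mem_insert_self _ _)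
    have htge : ∀ i, (b i - f i z) / f i w ≤ t := fun i =>
      S.le_max' _ (Finset.mem_insert_of_mem (Finset.mem_image_of_mem _ (Finset.mem_univ i)))
    refine ⟨z + t • w, ?_, -(t • w), ?_, by abel⟩
    · rw [hσ]
      intro i
      rw [← hfapp, map_add, map_smul]
      simp only [smul_eq_mul]
      by_cases hi : ∀ v ∈ τ, ∑ j, v j * u i j = 0
      · have := hz i hi
        rw [← hfapp] at this
        rw [hfwzero i hi]
        linarith
      · have hp := hfwpos i hi
        have := htge i
        have h3 : b i - f i z ≤ t * f i w := by
          rw [div_le_iff₀ hp] at this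
          linarith
        linarith
    · rw [← neg_smul]
      exact Submodule.smul_mem _ _ (Submodule.subset_span hwτ)
end

section
/- Let σ₁ and σ₂ be polyhedra in R^n whose recession cones both contain a cone τ, and let π : R^n → R^n/span(τ) be the quotient projection. Then π(σ₁) ∩ π(σ₂) = π(σ₁ ∩ σ₂). -/
lemma span_eq_sub (n : ℕ) (τ : Set (Fin n → ℝ))
    (hτ0 : (0 : Fin n → ℝ) ∈ τ)
    (hτadd : ∀ v ∈ τ, ∀ w ∈ τ, v + w ∈ τ)
    (hτsmul : ∀ v ∈ τ, ∀ t : ℝ, 0 ≤ t → t • v ∈ τ) :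
    ∀ x ∈ Submodule.span ℝ τ, ∃ a ∈ τ, ∃ b ∈ τ, x = a - b := by
  intro x hx
  induction hx using Submodule.span_induction with
  | mem y hy => exact ⟨y, hy, 0, hτ0, by simp⟩
  | zero => exact ⟨0, hτ0, 0, hτ0, by simp⟩
  | add y z _ _ hy hz =>
    obtain ⟨a, ha, b, hb, rfl⟩ := hy
    obtain ⟨c, hc, d, hd, rfl⟩ := hz
    exact ⟨a + c, hτadd a ha c hc, b + d, hτadd b hb d hd, by abel⟩
  | smul t y _ hy =>
    obtain ⟨a, ha, b, hb, rfl⟩ := hy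
    rcases le_total 0 t with ht | ht
    · exact ⟨t • a, hτsmul a ha t ht, t • b, hτsmul b hb t ht, by
        rw [smul_sub]⟩
    · refine ⟨(-t) • b, hτsmul b hb (-t) (by linarith), (-t) • a,
        hτsmul a ha (-t) (by linarith), ?_⟩
      rw [smul_sub, neg_smul, neg_smul]; abel

/-- if `τ` is a convex cone contained in the recession cones of
`σ₁` and `σ₂`, and `π : ℝⁿ → ℝⁿ/span(τ)` is the quotient projection, then
`π(σ₁) ∩ π(σ₂) = π(σ₁ ∩ σ₂)`. -/
theorem image_inter_of_recCone (n : ℕ) (σ₁ σ₂ τ : Set (Fin n → ℝ))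
    (hne₁ : σ₁.Nonempty) (hne₂ : σ₂.Nonempty)
    (hτ0 : (0 : Fin n → ℝ) ∈ τ)
    (hτadd : ∀ v ∈ τ, ∀ w ∈ τ, v + w ∈ τ)
    (hτsmul : ∀ v ∈ τ, ∀ t : ℝ, 0 ≤ t → t • v ∈ τ)
    (hrec₁ : ∀ x ∈ σ₁, ∀ v ∈ τ, ∀ t : ℝ, 0 ≤ t → x + t • v ∈ σ₁)
    (hrec₂ : ∀ x ∈ σ₂, ∀ v ∈ τ, ∀ t : ℝ, 0 ≤ t → x + t • v ∈ σ₂) :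
    (Submodule.span ℝ τ).mkQ '' σ₁ ∩ (Submodule.span ℝ τ).mkQ '' σ₂
      = (Submodule.span ℝ τ).mkQ '' (σ₁ ∩ σ₂) := by
  apply Set.Subset.antisymm
  · rintro z ⟨⟨x₁, hx₁, rfl⟩, ⟨x₂, hx₂, hx⟩⟩
    have hmem : x₁ - x₂ ∈ Submodule.span ℝ τ := by
      have h := (Submodule.Quotient.eq (Submodule.span ℝ τ)).mp
        (by simpa using hx.symm)
      simpa using h
    obtain ⟨a, ha, b, hb, hab⟩ := span_eq_sub n τ hτ0 hτadd hτsmul _ hmem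
    have h1 : x₁ + (1:ℝ) • b ∈ σ₁ := hrec₁ x₁ hx₁ b hb 1 zero_le_one
    have h2 : x₂ + (1:ℝ) • a ∈ σ₂ := hrec₂ x₂ hx₂ a ha 1 zero_le_one
    have heq : x₁ + (1:ℝ) • b = x₂ + (1:ℝ) • a := by
      simp only [one_smul]
      rw [sub_eq_sub_iff_add_eq_add] at hab
      rw [hab]; abel
    refine ⟨x₁ + (1:ℝ) • b, ⟨h1, heq ▸ h2⟩, ?_⟩
    have : (Submodule.span ℝ τ).mkQ b = 0 := by
      rw [Submodule.mkQ_apply, Submodule.Quotient.mk_eq_zero]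
      exact Submodule.subset_span hb
    simp [one_smul, map_add, this]
  · rintro z ⟨x, ⟨hx₁, hx₂⟩, rfl⟩
    exact ⟨⟨x, hx₁, rfl⟩, ⟨x, hx₂, rfl⟩⟩
end

section
/- Let σ be a polyhedron in R^n whose recession cone contains a cone τ, and let π : R^n → R^n/span(τ) be the projection. Then π(ρ(σ)) = ρ(π(σ)), i.e., the projection of the recession cone of σ equals the recession cone of the projected polyhedron. -/
/-! A direction `v` with `π v ∈ ρ(π σ)` is corrected to `v + w ∈ ρ(σ)` by some `w ∈ span τ`,
one inequality `fᵢ ≥ bᵢ` of `σ` at a time. If `fᵢ` vanishes on `τ`, it factors through `π` and is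
bounded below on `π σ`, so already `fᵢ v ≥ 0`. Otherwise some `w ∈ τ ⊆ ρ(σ)` has `fᵢ w > 0`, and a
large multiple of `w` fixes the sign of `fᵢ`. Since each correction lies in `ρ(σ)`, it does not
spoil the other inequalities, so the sum of the corrections works for all of them at once. -/

/-- The recession cone of a set `S`. -/
def recCone {V : Type*} [AddCommGroup V] [Module ℝ V] (S : Set V) : Set V :=
  {v | ∀ x ∈ S, ∀ t : ℝ, 0 ≤ t → x + t • v ∈ S}

open Submodule

section RecCone

variable {V W : Type*} [AddCommGroup V] [Module ℝ V] [AddCommGroup W] [Module ℝ W]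

lemma zero_mem_recCone (S : Set V) : (0 : V) ∈ recCone S := by
  intro x hx t _
  simpa using hx

lemma smul_mem_recCone {S : Set V} {v : V} (hv : v ∈ recCone S) {c : ℝ} (hc : 0 ≤ c) :
    c • v ∈ recCone S := by
  intro x hx t ht
  rw [smul_smul]
  exact hv x hx _ (mul_nonneg ht hc)

lemma LinearMap.image_recCone_subset (f : V →ₗ[ℝ] W) (S : Set V) :
    f '' recCone S ⊆ recCone (f '' S) := by
  rintro _ ⟨v, hv, rfl⟩ _ ⟨x, hx, rfl⟩ t ht
  exact ⟨x + t • v, hv x hx t ht, by simp⟩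

lemma nonneg_of_forall_le_add_mul {a b c : ℝ} (h : ∀ t : ℝ, 0 ≤ t → b ≤ a + t * c) : 0 ≤ c := by
  by_contra! hc
  have hab : b ≤ a := by simpa using h 0 le_rfl
  have key := h ((a - b + 1) / -c) (div_nonneg (by linarith) (by linarith))
  rw [div_mul_eq_mul_div, mul_div_assoc, div_neg, div_self hc.ne] at key
  linarith

lemma LinearMap.nonneg_of_mem_recCone (φ : V →ₗ[ℝ] ℝ) {S : Set V} {b : ℝ} (hS : S.Nonempty)
    (hb : ∀ x ∈ S, b ≤ φ x) {v : V} (hv : v ∈ recCone S) : 0 ≤ φ v := by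
  obtain ⟨x, hx⟩ := hS
  exact nonneg_of_forall_le_add_mul fun t ht => by simpa using hb _ (hv x hx t ht)

lemma recCone_setOf_forall_le {ι : Type*} (f : ι → V →ₗ[ℝ] ℝ) (b : ι → ℝ)
    (hS : {x | ∀ i, b i ≤ f i x}.Nonempty) :
    recCone {x | ∀ i, b i ≤ f i x} = {v | ∀ i, 0 ≤ f i v} := by
  ext v
  refine ⟨fun hv i => (f i).nonneg_of_mem_recCone hS (fun x hx => hx i) hv, ?_⟩
  intro hv x hx t ht i
  simp only [map_add, map_smul, smul_eq_mul]
  linarith [hx i, mul_nonneg ht (hv i)]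

lemma exists_mem_span_recCone_nonneg_add {S τ : Set V} (hS : S.Nonempty) (hτ : τ ⊆ recCone S)
    (φ : V →ₗ[ℝ] ℝ) {b : ℝ} (hb : ∀ x ∈ S, b ≤ φ x) {v : V}
    (hv : (span ℝ τ).mkQ v ∈ recCone ((span ℝ τ).mkQ '' S)) :
    ∃ w ∈ span ℝ τ, w ∈ recCone S ∧ 0 ≤ φ (v + w) := by
  by_cases hφ : ∀ w ∈ τ, φ w = 0
  · have hker : span ℝ τ ≤ LinearMap.ker φ := span_le.2 hφ
    have hbq : ∀ y ∈ (span ℝ τ).mkQ '' S, b ≤ (span ℝ τ).liftQ φ hker y := by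
      rintro _ ⟨x, hx, rfl⟩
      simpa using hb x hx
    refine ⟨0, zero_mem _, zero_mem_recCone S, ?_⟩
    simpa using ((span ℝ τ).liftQ φ hker).nonneg_of_mem_recCone (hS.image _) hbq hv
  · push Not at hφ
    obtain ⟨w, hwτ, hw⟩ := hφ
    have hw_pos : 0 < φ w := (φ.nonneg_of_mem_recCone hS hb (hτ hwτ)).lt_of_ne' hw
    refine ⟨(|φ v| / φ w) • w, smul_mem _ _ (subset_span hwτ),
      smul_mem_recCone (hτ hwτ) (by positivity), ?_⟩
    rw [map_add, map_smul, smul_eq_mul, div_mul_cancel₀ _ hw_pos.ne']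
    linarith [neg_abs_le (φ v)]

theorem image_mkQ_recCone_setOf_forall_le {ι : Type*} [Fintype ι] (f : ι → V →ₗ[ℝ] ℝ)
    (b : ι → ℝ) {τ : Set V} (hS : {x | ∀ i, b i ≤ f i x}.Nonempty)
    (hτ : τ ⊆ recCone {x | ∀ i, b i ≤ f i x}) :
    (span ℝ τ).mkQ '' recCone {x | ∀ i, b i ≤ f i x}
      = recCone ((span ℝ τ).mkQ '' {x | ∀ i, b i ≤ f i x}) := by
  refine subset_antisymm (LinearMap.image_recCone_subset _ _) ?_
  intro y hy
  obtain ⟨v, rfl⟩ := (span ℝ τ).mkQ_surjective y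
  choose g hg_span hg_rec hg using fun i =>
    exists_mem_span_recCone_nonneg_add hS hτ (f i) (fun x hx => hx i) hy
  rw [recCone_setOf_forall_le f b hS] at hg_rec ⊢
  refine ⟨v + ∑ i, g i, fun j => ?_, ?_⟩
  · have hsum : f j (g j) ≤ ∑ i, f j (g i) :=
      Finset.single_le_sum (fun i _ => hg_rec i j) (Finset.mem_univ j)
    rw [map_add, map_sum]
    linarith [hg j, map_add (f j) v (g j)]
  · simp [(Quotient.mk_eq_zero _).2 (sum_mem fun i _ => hg_span i)]

end RecCone

theorem image_recCone_eq_recCone_image_general (n r : ℕ) (u : Fin r → Fin n → ℝ)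
    (b : Fin r → ℝ) (σ τ : Set (Fin n → ℝ))
    (hσ : σ = {x | ∀ i, b i ≤ ∑ j, x j * u i j})
    (hne : σ.Nonempty)
    (hτrec : τ ⊆ recCone σ) :
    (Submodule.span ℝ τ).mkQ '' recCone σ
      = recCone ((Submodule.span ℝ τ).mkQ '' σ) := by
  subst hσ
  exact image_mkQ_recCone_setOf_forall_le (fun i => (dotProductBilin ℝ ℝ).flip (u i)) b
    hne hτrec

/-- for a nonempty polyhedron `σ` whose recession cone contains a
convex cone `τ`, and `π : ℝⁿ → ℝⁿ/span(τ)` the quotient map, the projection of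
the recession cone of `σ` equals the recession cone of the projected polyhedron:
`π(ρ(σ)) = ρ(π(σ))`. -/
theorem image_recCone_eq_recCone_image (n r : ℕ) (u : Fin r → Fin n → ℝ)
    (b : Fin r → ℝ) (σ τ : Set (Fin n → ℝ))
    (hσ : σ = {x | ∀ i, b i ≤ ∑ j, x j * u i j})
    (hne : σ.Nonempty)
    (hτ0 : (0 : Fin n → ℝ) ∈ τ)
    (hτadd : ∀ v ∈ τ, ∀ w ∈ τ, v + w ∈ τ)
    (hτsmul : ∀ v ∈ τ, ∀ t : ℝ, 0 ≤ t → t • v ∈ τ)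
    (hτrec : τ ⊆ recCone σ) :
    (Submodule.span ℝ τ).mkQ '' recCone σ
      = recCone ((Submodule.span ℝ τ).mkQ '' σ) :=
  image_recCone_eq_recCone_image_general n r u b σ τ hσ hne hτrec
end

section
/- Let Σ be a polyhedral complex in R^n compatible with a fan Δ, refined so that the recession cone of every face of Σ is a cone of Δ. Fix τ ∈ Δ and let π : R^n → R^n/span(τ) be the projection. Then the map σ ↦ π(σ) is a bijection between the faces of Σ whose recession cone contains τ and the faces of the projected complex π({σ ∈ Σ : τ ⊆ ρ(σ)}); moreover this bijection preserves codimension. -/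
open Pointwise

/-!
Translating along `τ ⊆ ρ(σ)` moves points of `σ` without leaving it, so two faces `σ₁, σ₂` with the
same image modulo `span τ` meet: for `x ∈ σ₁` with `x - y = a - b` (`y ∈ σ₂`, `a, b ∈ τ`) the point
`x + b = y + a` lies in both. Since `σ₁ ∩ σ₂` is a face of `σ₁` and `x + b` is the midpoint of
`x, x + 2b ∈ σ₁`, the point `x` itself lies in `σ₁ ∩ σ₂`; hence `σ₁ ⊆ σ₂` and by symmetry `σ₁ = σ₂`.
For the dimension count, `span τ ⊆ span (σ - σ)`, and rank–nullity for the projection restricted to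
`span (σ - σ)` gives `dim π(σ) + dim span τ = dim σ`.
-/

section Cone

variable {V : Type*} [AddCommGroup V] [Module ℝ V] {τ : Set V}

lemma add_mem_of_convex_of_smul_mem (hconv : Convex ℝ τ)
    (hsmul : ∀ v ∈ τ, ∀ t : ℝ, 0 ≤ t → t • v ∈ τ) {a b : V} (ha : a ∈ τ) (hb : b ∈ τ) :
    a + b ∈ τ := by
  have hmid : (1 / 2 : ℝ) • a + (1 / 2 : ℝ) • b ∈ τ :=
    hconv ha hb (by norm_num) (by norm_num) (by norm_num)
  convert hsmul _ hmid 2 zero_le_two using 1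
  rw [smul_add, smul_smul, smul_smul]
  norm_num

lemma span_subset_sub_of_convex_of_smul_mem (hconv : Convex ℝ τ) (h0 : (0 : V) ∈ τ)
    (hsmul : ∀ v ∈ τ, ∀ t : ℝ, 0 ≤ t → t • v ∈ τ) :
    (Submodule.span ℝ τ : Set V) ⊆ τ - τ := by
  intro w hw
  induction hw using Submodule.span_induction with
  | mem v hv => exact ⟨v, hv, 0, h0, sub_zero v⟩
  | zero => exact ⟨0, h0, 0, h0, sub_zero 0⟩
  | add _ _ _ _ h₁ h₂ =>
    obtain ⟨a, ha, b, hb, rfl⟩ := h₁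
    obtain ⟨c, hc, d, hd, rfl⟩ := h₂
    exact ⟨a + c, add_mem_of_convex_of_smul_mem hconv hsmul ha hc,
      b + d, add_mem_of_convex_of_smul_mem hconv hsmul hb hd, add_sub_add_comm a c b d⟩
  | smul t _ _ h =>
    obtain ⟨a, ha, b, hb, rfl⟩ := h
    rcases le_total 0 t with ht | ht
    · exact ⟨t • a, hsmul a ha t ht, t • b, hsmul b hb t ht, (smul_sub t a b).symm⟩
    · refine ⟨(-t) • b, hsmul b hb (-t) (neg_nonneg.mpr ht),
        (-t) • a, hsmul a ha (-t) (neg_nonneg.mpr ht), ?_⟩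
      change (-t) • b - (-t) • a = t • (a - b)
      rw [neg_smul, neg_smul, neg_sub_neg, smul_sub]

end Cone

section RecessionCone

variable {V : Type*} [AddCommGroup V] [Module ℝ V] {S : Set V} {x v : V}

lemma add_mem_of_mem_recCone (hv : v ∈ recCone S) (hx : x ∈ S) : x + v ∈ S := by
  simpa using hv x hx 1 zero_le_one

lemma recCone_subset_sub (hS : S.Nonempty) : recCone S ⊆ S - S := by
  obtain ⟨x, hx⟩ := hS
  exact fun v hv => ⟨x + v, add_mem_of_mem_recCone hv hx, x, hx, add_sub_cancel_left x v⟩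

lemma IsExtreme.mem_of_add_mem_of_mem_recCone {F : Set V} (hF : IsExtreme ℝ S F)
    (hx : x ∈ S) (hv : v ∈ recCone S) (hxv : x + v ∈ F) : x ∈ F := by
  have hseg : x + v ∈ openSegment ℝ (x + v - v) (x + v + v) := mem_openSegment_sub_add _ _
  rw [add_sub_cancel_right] at hseg
  have hx2v : x + v + v ∈ S := add_mem_of_mem_recCone hv (add_mem_of_mem_recCone hv hx)
  exact hF.left_mem_of_mem_openSegment hx hx2v hxv hseg

end RecessionCone

section Projection

variable {V : Type*} [AddCommGroup V] [Module ℝ V] {τ σ₁ σ₂ : Set V}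

lemma exists_add_mem_inter_of_mkQ_image_eq (hτ : (Submodule.span ℝ τ : Set V) ⊆ τ - τ)
    (h₁ : τ ⊆ recCone σ₁) (h₂ : τ ⊆ recCone σ₂)
    (heq : (Submodule.span ℝ τ).mkQ '' σ₁ = (Submodule.span ℝ τ).mkQ '' σ₂)
    {x : V} (hx : x ∈ σ₁) : ∃ b ∈ τ, x + b ∈ σ₁ ∩ σ₂ := by
  obtain ⟨y, hy, hxy⟩ : (Submodule.span ℝ τ).mkQ x ∈ (Submodule.span ℝ τ).mkQ '' σ₂ :=
    heq ▸ Set.mem_image_of_mem _ hx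
  have hker : x - y ∈ Submodule.span ℝ τ :=
    (Submodule.Quotient.eq _).mp hxy.symm
  obtain ⟨a, ha, b, hb, hab⟩ := hτ hker
  have hxb : x + b = y + a := by
    rw [add_comm y]
    exact sub_eq_sub_iff_add_eq_add.mp hab.symm
  exact ⟨b, hb, add_mem_of_mem_recCone (h₁ hb) hx,
    hxb ▸ add_mem_of_mem_recCone (h₂ ha) hy⟩

lemma subset_of_mkQ_image_eq (hτ : (Submodule.span ℝ τ : Set V) ⊆ τ - τ)
    (h₁ : τ ⊆ recCone σ₁) (h₂ : τ ⊆ recCone σ₂)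
    (hface : (σ₁ ∩ σ₂).Nonempty → IsExtreme ℝ σ₁ (σ₁ ∩ σ₂))
    (heq : (Submodule.span ℝ τ).mkQ '' σ₁ = (Submodule.span ℝ τ).mkQ '' σ₂) : σ₁ ⊆ σ₂ := by
  intro x hx
  obtain ⟨b, hb, hxb⟩ := exists_add_mem_inter_of_mkQ_image_eq hτ h₁ h₂ heq hx
  exact ((hface ⟨_, hxb⟩).mem_of_add_mem_of_mem_recCone hx (h₁ hb) hxb).2

end Projection

lemma Submodule.finrank_map_mkQ_add_finrank {K V : Type*} [DivisionRing K] [AddCommGroup V]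
    [Module K V] {T W : Submodule K V} [FiniteDimensional K W] (hTW : T ≤ W) :
    Module.finrank K (W.map T.mkQ) + Module.finrank K T = Module.finrank K W := by
  have hrange : LinearMap.range (T.mkQ ∘ₗ W.subtype) = W.map T.mkQ := by
    rw [LinearMap.range_comp, Submodule.range_subtype]
  have hker : LinearMap.ker (T.mkQ ∘ₗ W.subtype) = T.comap W.subtype := by
    rw [LinearMap.ker_comp, Submodule.ker_mkQ]
  rw [← hrange, ← (Submodule.comapSubtypeEquivOfLe hTW).finrank_eq, ← hker]
  exact LinearMap.finrank_range_add_finrank_ker _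

lemma finrank_span_mkQ_image_sub_add_finrank {V : Type*} [AddCommGroup V] [Module ℝ V]
    [FiniteDimensional ℝ V] {τ σ : Set V} (hσ : σ.Nonempty) (hτσ : τ ⊆ recCone σ) :
    Module.finrank ℝ (Submodule.span ℝ
        ((Submodule.span ℝ τ).mkQ '' σ - (Submodule.span ℝ τ).mkQ '' σ))
      + Module.finrank ℝ (Submodule.span ℝ τ)
      = Module.finrank ℝ (Submodule.span ℝ (σ - σ)) := by
  have hle : Submodule.span ℝ τ ≤ Submodule.span ℝ (σ - σ) :=
    Submodule.span_mono (hτσ.trans (recCone_subset_sub hσ))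
  rw [← Set.image_sub, Submodule.span_image]
  exact Submodule.finrank_map_mkQ_add_finrank hle

theorem projection_face_bijection_general (n : ℕ)
    (Δ Sc : Finset (Set (Fin n → ℝ))) (τ : Set (Fin n → ℝ)) (hτΔ : τ ∈ Δ)
    (hΔcone : ∀ δ ∈ Δ, Convex ℝ δ ∧ (0 : Fin n → ℝ) ∈ δ ∧
        ∀ v ∈ δ, ∀ t : ℝ, 0 ≤ t → t • v ∈ δ)
    (hpoly : ∀ σ ∈ Sc, σ.Nonempty ∧ ∃ (r : ℕ) (u : Fin r → Fin n → ℝ)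
        (b : Fin r → ℝ), σ = {x | ∀ i, b i ≤ ∑ j, x j * u i j})
    (hface : ∀ σ₁ ∈ Sc, ∀ σ₂ ∈ Sc, (σ₁ ∩ σ₂).Nonempty →
        IsExposed ℝ σ₁ (σ₁ ∩ σ₂) ∧ IsExposed ℝ σ₂ (σ₁ ∩ σ₂)) :
    Set.InjOn (fun σ => (Submodule.span ℝ τ).mkQ '' σ)
        {σ | σ ∈ Sc ∧ τ ⊆ recCone σ} ∧
    ∀ σ ∈ Sc, τ ⊆ recCone σ →
      Module.finrank ℝ (Submodule.span ℝ
          ((Submodule.span ℝ τ).mkQ '' σ - (Submodule.span ℝ τ).mkQ '' σ))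
        + Module.finrank ℝ (Submodule.span ℝ τ)
        = Module.finrank ℝ (Submodule.span ℝ (σ - σ)) := by
  obtain ⟨hτconv, hτ0, hτsmul⟩ := hΔcone τ hτΔ
  have hτ := span_subset_sub_of_convex_of_smul_mem hτconv hτ0 hτsmul
  refine ⟨fun σ₁ ⟨h₁, hτ₁⟩ σ₂ ⟨h₂, hτ₂⟩ heq => ?_,
    fun σ hσ hτσ => finrank_span_mkQ_image_sub_add_finrank (hpoly σ hσ).1 hτσ⟩
  refine (subset_of_mkQ_image_eq hτ hτ₁ hτ₂ ?_ heq).antisymm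
    (subset_of_mkQ_image_eq hτ hτ₂ hτ₁ ?_ heq.symm)
  · exact fun hne => (hface σ₁ h₁ σ₂ h₂ hne).1.isExtreme
  · intro hne
    rw [Set.inter_comm] at hne ⊢
    exact (hface σ₁ h₁ σ₂ h₂ hne).2.isExtreme

/-- let `Sc` be a polyhedral complex compatible with a fan `Δ`,
refined so that the recession cone of every face lies in `Δ`, and let `τ ∈ Δ`.
Then `σ ↦ π(σ)` (with `π : ℝⁿ → ℝⁿ/span(τ)` the projection) is injective on the
faces of `Sc` whose recession cone contains `τ` — hence a bijection onto the
faces of the projected complex — and it preserves codimension: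
`dim π(σ) + dim span(τ) = dim σ`. -/
theorem projection_face_bijection (n : ℕ)
    (Δ Sc : Finset (Set (Fin n → ℝ))) (τ : Set (Fin n → ℝ)) (hτΔ : τ ∈ Δ)
    (hΔcone : ∀ δ ∈ Δ, Convex ℝ δ ∧ (0 : Fin n → ℝ) ∈ δ ∧
        ∀ v ∈ δ, ∀ t : ℝ, 0 ≤ t → t • v ∈ δ)
    (hpoly : ∀ σ ∈ Sc, σ.Nonempty ∧ ∃ (r : ℕ) (u : Fin r → Fin n → ℝ)
        (b : Fin r → ℝ), σ = {x | ∀ i, b i ≤ ∑ j, x j * u i j})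
    (hrec : ∀ σ ∈ Sc, recCone σ ∈ Δ)
    (hface : ∀ σ₁ ∈ Sc, ∀ σ₂ ∈ Sc, (σ₁ ∩ σ₂).Nonempty →
        IsExposed ℝ σ₁ (σ₁ ∩ σ₂) ∧ IsExposed ℝ σ₂ (σ₁ ∩ σ₂)) :
    Set.InjOn (fun σ => (Submodule.span ℝ τ).mkQ '' σ)
        {σ | σ ∈ Sc ∧ τ ⊆ recCone σ} ∧
    ∀ σ ∈ Sc, τ ⊆ recCone σ →
      Module.finrank ℝ (Submodule.span ℝ
          ((Submodule.span ℝ τ).mkQ '' σ - (Submodule.span ℝ τ).mkQ '' σ))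
        + Module.finrank ℝ (Submodule.span ℝ τ)
        = Module.finrank ℝ (Submodule.span ℝ (σ - σ)) :=
  projection_face_bijection_general n Δ Sc τ hτΔ hΔcone hpoly hface
end

section
/- Let σ be a polyhedron in R^n given by σ = ∩_{i∈I}{x : ⟨x, u_i⟩ ≥ b_i}, with τ ⊆ ρ(σ). For a subset J ⊆ I ∩ τ^⊥, the face F_J of π(σ) obtained by turning the inequalities indexed by J into equalities has preimage in σ equal to E_J = ∩_{i∈I\J}{x : ⟨x,u_i⟩ ≥ b_i} ∩ ∩_{i∈J}{x : ⟨x,u_i⟩ = b_i}, and J ↦ (F_J, E_J) gives a one-to-one correspondence between faces of π(σ) and faces of σ whose recession cone contains τ. -/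
/-- let `σ = ∩ᵢ {x : ⟨x, uᵢ⟩ ≥ bᵢ}` with `τ ⊆ ρ(σ)`, and
`π : ℝⁿ → ℝⁿ/span(τ)`. For `J` a set of indices with `u_i ∈ τ^⊥`, let `F_J` be
the face of the projection obtained by turning the inequalities of `J` into
equalities, and `E_J` the corresponding subset of `ℝⁿ`. Then the preimage of
`F_J` in `σ` is `E_J`, and `π(E_J) = F_J ∩ π(σ)`; these two equalities give the
one-to-one correspondence between faces of `π(σ)` and faces of `σ` whose
recession cone contains `τ`. -/
theorem face_correspondence (n r : ℕ) (u : Fin r → Fin n → ℝ) (b : Fin r → ℝ)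
    (σ τ : Set (Fin n → ℝ))
    (hσ : σ = {x | ∀ i, b i ≤ ∑ j, x j * u i j})
    (hne : σ.Nonempty)
    (hτ0 : (0 : Fin n → ℝ) ∈ τ)
    (hτadd : ∀ v ∈ τ, ∀ w ∈ τ, v + w ∈ τ)
    (hτsmul : ∀ v ∈ τ, ∀ t : ℝ, 0 ≤ t → t • v ∈ τ)
    (hτrec : ∀ x ∈ σ, ∀ v ∈ τ, ∀ t : ℝ, 0 ≤ t → x + t • v ∈ σ)
    (J : Finset (Fin r))
    (hJ : ∀ i ∈ J, ∀ v ∈ τ, ∑ j, v j * u i j = 0)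
    (π : (Fin n → ℝ) →ₗ[ℝ] ((Fin n → ℝ) ⧸ Submodule.span ℝ τ))
    (hπ : π = (Submodule.span ℝ τ).mkQ)
    (FJ : Set ((Fin n → ℝ) ⧸ Submodule.span ℝ τ)) (EJ : Set (Fin n → ℝ))
    (hFJ : FJ = {y | (∀ i, (∀ v ∈ τ, ∑ j, v j * u i j = 0) → i ∉ J →
                    ∀ x, π x = y → b i ≤ ∑ j, x j * u i j) ∧
                  (∀ i ∈ J, ∀ x, π x = y → ∑ j, x j * u i j = b i)})
    (hEJ : EJ = {x | (∀ i, i ∉ J → b i ≤ ∑ j, x j * u i j) ∧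
                  (∀ i ∈ J, ∑ j, x j * u i j = b i)}) :
    σ ∩ π ⁻¹' FJ = EJ ∧ π '' EJ = FJ ∩ π '' σ := by

  subst hσ hπ hFJ hEJ
  have key : ∀ i : Fin r, (∀ v ∈ τ, ∑ j, v j * u i j = 0) →
      ∀ x x' : Fin n → ℝ,
      (Submodule.span ℝ τ).mkQ x = (Submodule.span ℝ τ).mkQ x' →
      ∑ j, x j * u i j = ∑ j, x' j * u i j := by
    intro i hi x x' hx
    set L : (Fin n → ℝ) →ₗ[ℝ] ℝ :=
      { toFun := fun z => ∑ j, z j * u i j,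
        map_add' := by intro a c; simp [add_mul, Finset.sum_add_distrib]
        map_smul' := by intro c a; simp [Finset.mul_sum, mul_assoc] } with hL
    have hker : Submodule.span ℝ τ ≤ LinearMap.ker L :=
      Submodule.span_le.mpr (fun v hv => by
        simpa [hL, LinearMap.mem_ker] using hi v hv)
    have hmem : x - x' ∈ Submodule.span ℝ τ := by
      rw [Submodule.mkQ_apply, Submodule.mkQ_apply, Submodule.Quotient.eq] at hx
      exact hx
    have h0 : L (x - x') = 0 := hker hmem
    have h1 : L x - L x' = 0 := by simpa [map_sub] using h0
    have := sub_eq_zero.mp h1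
    simpa [hL] using this
  constructor
  · ext x
    simp only [Set.mem_inter_iff, Set.mem_preimage, Set.mem_setOf_eq]
    constructor
    · rintro ⟨hxσ, _h1, h2⟩
      exact ⟨fun i _ => hxσ i, fun i hi => h2 i hi x rfl⟩
    · rintro ⟨h1, h2⟩
      have hxσ : ∀ i, b i ≤ ∑ j, x j * u i j := fun i => by
        by_cases hiJ : i ∈ J
        · exact (h2 i hiJ).ge
        · exact h1 i hiJ
      refine ⟨hxσ, ?_, ?_⟩
      · intro i hi hiJ x' hx'
        rw [key i hi x' x hx']
        exact h1 i hiJ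
      · intro i hiJ x' hx'
        rw [key i (hJ i hiJ) x' x hx']
        exact h2 i hiJ
  · ext y
    simp only [Set.mem_inter_iff, Set.mem_image, Set.mem_setOf_eq]
    constructor
    · rintro ⟨x, ⟨h1, h2⟩, rfl⟩
      have hxσ : ∀ i, b i ≤ ∑ j, x j * u i j := fun i => by
        by_cases hiJ : i ∈ J
        · exact (h2 i hiJ).ge
        · exact h1 i hiJ
      refine ⟨⟨?_, ?_⟩, ⟨x, hxσ, rfl⟩⟩
      · intro i hi hiJ x' hx'
        rw [key i hi x' x hx']
        exact h1 i hiJ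
      · intro i hiJ x' hx'
        rw [key i (hJ i hiJ) x' x hx']
        exact h2 i hiJ
    · rintro ⟨⟨_h1, h2⟩, x, hxσ, rfl⟩
      exact ⟨x, ⟨fun i _ => hxσ i, fun i hiJ => h2 i hiJ x rfl⟩, rfl⟩
end
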